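/- arXiv:0805.0396 — 6 statements merged into one kernel-verified Lean document; each statement's English description precedes it below -/
import Mathlib

section
/- Let k ≥ 1 be an integer and a_1, …, a_k ∈ ℝ. The family of positive reals exp(a_1 b_1 + a_2 b_2 + ⋯ + a_k b_k), indexed by all integer tuples (b_1, …, b_k) with 1 ≤ b_1 < b_2 < ⋯ < b_k, is summable if and only if every tail sum is negative, i.e. a_k < 0, a_{k−1} + a_k < 0, …, and a_1 + a_2 + ⋯ + a_k < 0. -/
/-!
Write `b₁ = m + 1` and `bᵢ = b₁ + b'ᵢ₋₁` for `i ≥ 2`, where `b'` is again an increasing tuple of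
positive integers. Then `exp (∑ aᵢ bᵢ) = exp ((a₁ + ⋯ + a_k) (m + 1)) · exp (∑ aᵢ₊₁ b'ᵢ)`, so the
family is the product of a geometric series in `m` with the family for `(a₂, …, a_k)`. A product
of two positive families is summable iff both factors are, and the geometric factor is summable
iff `a₁ + ⋯ + a_k < 0`; induction on `k` finishes the proof.
-/

open Finset Real

abbrev IncreasingPosTuple (k : ℕ) : Type := {f : Fin k → ℕ // StrictMono f ∧ ∀ i, 1 ≤ f i}

instance (k : ℕ) : Nonempty (IncreasingPosTuple k) :=
  ⟨⟨fun i => i + 1, fun _ _ h => Nat.succ_lt_succ h, fun _ => Nat.le_add_left 1 _⟩⟩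

def IncreasingPosTuple.consEquiv (n : ℕ) :
    ℕ × IncreasingPosTuple n ≃ IncreasingPosTuple (n + 1) where
  toFun p := ⟨Fin.cons (p.1 + 1) (fun j => p.2.1 j + (p.1 + 1)), by
      intro i j hij
      cases j using Fin.cases with
      | zero => exact absurd hij (Fin.not_lt_zero _)
      | succ j =>
        have := p.2.2.2 j
        cases i using Fin.cases with
        | zero => simp only [Fin.cons_zero, Fin.cons_succ]; omega
        | succ i => simpa using p.2.2.1 (Fin.succ_lt_succ_iff.1 hij),
    fun i => Fin.cases (by simp) (fun j => by simp only [Fin.cons_succ]; omega) i⟩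
  invFun b := (b.1 0 - 1, ⟨fun j => b.1 j.succ - b.1 0, fun i j hij => by
      have := b.2.1 (Fin.succ_pos i); have := b.2.1 (Fin.succ_lt_succ_iff.2 hij)
      dsimp only; omega,
    fun j => by have := b.2.1 (Fin.succ_pos j); dsimp only; omega⟩)
  left_inv p := by ext <;> simp
  right_inv b := by
    ext i
    have := b.2.2 0
    cases i using Fin.cases with
    | zero => simp; omega
    | succ i => have := b.2.1 (Fin.succ_pos i); simp; omega

lemma summable_prod_mul_iff_of_pos {α β : Type*} [Nonempty α] [Nonempty β] {u : α → ℝ} {v : β → ℝ}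
    (hu : ∀ x, 0 < u x) (hv : ∀ y, 0 < v y) :
    Summable (fun p : α × β => u p.1 * v p.2) ↔ Summable u ∧ Summable v := by
  refine ⟨fun h => ⟨?_, ?_⟩, fun h =>
    h.1.mul_of_nonneg h.2 (fun x => (hu x).le) (fun y => (hv y).le)⟩
  · obtain ⟨y⟩ := ‹Nonempty β›
    exact (summable_mul_right_iff (hv y).ne').1 (h.comp_injective (Prod.mk_left_injective y))
  · obtain ⟨x⟩ := ‹Nonempty α›
    exact (summable_mul_left_iff (hu x).ne').1 (h.prod_factor x)

lemma summable_exp_mul_succ_iff {s : ℝ} : Summable (fun m : ℕ => exp (s * ↑(m + 1))) ↔ s < 0 := by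
  simp only [mul_comm s]
  exact (summable_nat_add_iff 1 (f := fun m : ℕ => exp (m * s))).trans summable_exp_nat_mul_iff

lemma IncreasingPosTuple.sum_mul_consEquiv {n : ℕ} (a : Fin (n + 1) → ℝ)
    (p : ℕ × IncreasingPosTuple n) :
    ∑ i, a i * ((IncreasingPosTuple.consEquiv n p).1 i : ℝ) =
      (∑ i, a i) * ↑(p.1 + 1) + ∑ j, a j.succ * (p.2.1 j : ℝ) := by
  simp only [IncreasingPosTuple.consEquiv, Equiv.coe_fn_mk, Fin.sum_univ_succ, Fin.cons_zero,
    Fin.cons_succ]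
  push_cast
  simp only [mul_add, Finset.sum_add_distrib, ← Finset.sum_mul]
  ring

theorem stmt_0_general (k : ℕ) (a : Fin k → ℝ) :
    Summable (fun b : {f : Fin k → ℕ // StrictMono f ∧ ∀ i, 1 ≤ f i} =>
      Real.exp (∑ i, a i * (b.1 i : ℝ))) ↔
    ∀ i : Fin k, ∑ j ∈ Finset.Ici i, a j < 0 := by
  induction k with
  | zero => exact iff_of_true Summable.of_finite (fun i => i.elim0)
  | succ n ih =>
    rw [← (IncreasingPosTuple.consEquiv n).summable_iff]
    simp only [Function.comp_def, IncreasingPosTuple.sum_mul_consEquiv, exp_add]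
    rw [summable_prod_mul_iff_of_pos (u := fun m : ℕ => exp ((∑ i, a i) * ↑(m + 1)))
      (v := fun b : IncreasingPosTuple n => exp (∑ j, a j.succ * (b.1 j : ℝ)))
      (fun _ => exp_pos _) (fun _ => exp_pos _)]
    rw [summable_exp_mul_succ_iff, ih, Fin.forall_fin_succ]
    simp [Fin.sum_Ici_succ]

/-- The family `exp(a₁b₁ + ⋯ + a_k b_k)`, indexed by the integer tuples
`1 ≤ b₁ < b₂ < ⋯ < b_k`, is summable iff all tail sums of the `aᵢ` are negative. -/
theorem stmt_0 (k : ℕ) (hk : 1 ≤ k) (a : Fin k → ℝ) :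
    Summable (fun b : {f : Fin k → ℕ // StrictMono f ∧ ∀ i, 1 ≤ f i} =>
      Real.exp (∑ i, a i * (b.1 i : ℝ))) ↔
    ∀ i : Fin k, ∑ j ∈ Finset.Ici i, a j < 0 :=
  stmt_0_general k a
end

section
/- Let k ≥ 1 be an integer and a_1, …, a_k ∈ ℝ such that every tail sum a_n + a_{n+1} + ⋯ + a_k (for 1 ≤ n ≤ k) is negative. Then the sum over all integer tuples (b_1, …, b_k) with 1 ≤ b_1 < b_2 < ⋯ < b_k of exp(a_1 b_1 + ⋯ + a_k b_k) equals the product over n = 1, …, k of exp(a_n + a_{n+1} + ⋯ + a_k) / (1 − exp(a_n + a_{n+1} + ⋯ + a_k)). -/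
/-!
Writing `bᵢ = (c₁ + 1) + ⋯ + (cᵢ + 1)` identifies the tuples `1 ≤ b₁ < ⋯ < b_k` with arbitrary
`c ∈ ℕᵏ`, and exchanging the order of summation turns `∑ aᵢ bᵢ` into `∑ⱼ (cⱼ + 1) Tⱼ` with the tail
sums `Tⱼ = aⱼ + ⋯ + a_k`. The summand thus factors as `∏ⱼ (exp Tⱼ)^(cⱼ + 1)`, so the whole sum is a
product of `k` geometric series, each convergent because `Tⱼ < 0`.
-/

open Finset

namespace Fin

variable {k : ℕ}

def cumSum (c : Fin k → ℕ) (i : Fin k) : ℕ := ∑ j ∈ Iic i, (c j + 1)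

def gaps (b : Fin k → ℕ) (i : Fin k) : ℕ :=
  b i - 1 - if h : 0 < i.val then b ⟨i - 1, by omega⟩ else 0

lemma cumSum_of_val_eq_zero (c : Fin k → ℕ) {i : Fin k} (hi : i.val = 0) :
    cumSum c i = c i + 1 := by
  have : Iic i = {i} := by
    ext j
    simp only [mem_Iic, mem_singleton, le_def, Fin.ext_iff]
    omega
  simp [cumSum, this]

lemma cumSum_of_val_eq_succ (c : Fin k → ℕ) {i j : Fin k} (hij : j.val = i.val + 1) :
    cumSum c j = cumSum c i + (c j + 1) := by
  have hj : Iic j = insert j (Iic i) := by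
    ext l
    simp only [mem_Iic, mem_insert, le_def, Fin.ext_iff]
    omega
  have hji : j ∉ Iic i := by simp only [mem_Iic, le_def]; omega
  rw [cumSum, hj, sum_insert hji, add_comm, cumSum]

lemma gaps_cumSum (c : Fin k → ℕ) : gaps (cumSum c) = c := by
  funext i
  rw [gaps]
  split_ifs with hi
  · rw [cumSum_of_val_eq_succ c (i := ⟨i - 1, by omega⟩) (by simp; omega)]
    omega
  · rw [cumSum_of_val_eq_zero c (by omega)]
    omega

lemma cumSum_gaps {b : Fin k → ℕ} (hb : StrictMono b) (hb₁ : ∀ i, 1 ≤ b i) :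
    cumSum (gaps b) = b := by
  suffices ∀ n (i : Fin k), i.val = n → cumSum (gaps b) i = b i from
    funext fun i => this i i rfl
  intro n
  induction n with
  | zero =>
    intro i hi
    rw [cumSum_of_val_eq_zero _ hi, gaps, dif_neg (by omega)]
    have := hb₁ i
    omega
  | succ n ih =>
    intro i hi
    have hpred : (⟨i - 1, by omega⟩ : Fin k) < i := by rw [lt_def]; simp; omega
    rw [cumSum_of_val_eq_succ _ (i := ⟨i - 1, by omega⟩) (by simp; omega),
      ih _ (by simp; omega), gaps, dif_pos (by omega)]
    have := hb hpred
    omega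

lemma strictMono_cumSum (c : Fin k → ℕ) : StrictMono (cumSum c) := fun i j hij =>
  sum_lt_sum_of_subset (Iic_subset_Iic.mpr hij.le) (mem_Iic.mpr le_rfl) (by simpa using hij.not_ge)
    (by omega) fun _ _ _ => Nat.zero_le _

lemma one_le_cumSum (c : Fin k → ℕ) (i : Fin k) : 1 ≤ cumSum c i :=
  (Nat.le_add_left 1 (c i)).trans <|
    single_le_sum (f := fun j => c j + 1) (fun _ _ => Nat.zero_le _) (mem_Iic.mpr le_rfl)

variable (k) in
def cumSumEquiv : (Fin k → ℕ) ≃ {b : Fin k → ℕ // StrictMono b ∧ ∀ i, 1 ≤ b i} where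
  toFun c := ⟨cumSum c, strictMono_cumSum c, one_le_cumSum c⟩
  invFun b := gaps b.1
  left_inv := gaps_cumSum
  right_inv b := Subtype.ext (cumSum_gaps b.2.1 b.2.2)

lemma sum_mul_cumSum {R : Type*} [CommSemiring R] (a : Fin k → R) (c : Fin k → ℕ) :
    ∑ i, a i * (cumSum c i : R) = ∑ j, ((c j : R) + 1) * ∑ i ∈ Ici j, a i := by
  simp only [cumSum, Nat.cast_sum, Nat.cast_add, Nat.cast_one, mul_sum]
  rw [sum_comm' (t' := univ) (s' := Ici) (by simp)]
  exact sum_congr rfl fun j _ => sum_congr rfl fun i _ => mul_comm _ _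

lemma exp_sum_mul_cumSum (a : Fin k → ℝ) (c : Fin k → ℕ) :
    Real.exp (∑ i, a i * (cumSum c i : ℝ)) =
      ∏ j, Real.exp (∑ i ∈ Ici j, a i) ^ (c j + 1) := by
  rw [sum_mul_cumSum, Real.exp_sum]
  refine prod_congr rfl fun j _ => ?_
  rw [← Real.exp_nat_mul]
  push_cast
  rfl

end Fin

theorem hasSum_prod_pi_of_nonneg {β : Type*} {k : ℕ} {f : Fin k → β → ℝ} {s : Fin k → ℝ}
    (hf : ∀ i, HasSum (f i) (s i)) (hf₀ : ∀ i b, 0 ≤ f i b) :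
    HasSum (fun c : Fin k → β => ∏ i, f i (c i)) (∏ i, s i) := by
  induction k with
  | zero => simp
  | succ k ih =>
    have htail := ih (fun i => hf i.succ) (fun i => hf₀ i.succ)
    have h0 : 0 ≤ f 0 := hf₀ 0
    have h1 : 0 ≤ fun c : Fin k → β => ∏ i, f i.succ (c i) :=
      fun c => prod_nonneg fun i _ => hf₀ _ _
    have hsummable := (hf 0).summable.mul_of_nonneg htail.summable h0 h1
    rw [Fin.prod_univ_succ, ← (Fin.consEquiv fun _ => β).hasSum_iff]
    exact ((hf 0).mul htail hsummable).congr_fun fun x => by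
      simp [Fin.consEquiv, Fin.prod_univ_succ]

theorem hasSum_pow_succ_of_lt_one {r : ℝ} (h₀ : 0 ≤ r) (h₁ : r < 1) :
    HasSum (fun n : ℕ => r ^ (n + 1)) (r / (1 - r)) := by
  simpa [pow_succ', div_eq_mul_inv] using (hasSum_geometric_of_lt_one h₀ h₁).mul_left r

theorem stmt_1_general (k : ℕ) (a : Fin k → ℝ)
    (h : ∀ i : Fin k, ∑ j ∈ Finset.Ici i, a j < 0) :
    ∑' b : {f : Fin k → ℕ // StrictMono f ∧ ∀ i, 1 ≤ f i},
      Real.exp (∑ i, a i * (b.1 i : ℝ)) =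
    ∏ i : Fin k,
      Real.exp (∑ j ∈ Finset.Ici i, a j) / (1 - Real.exp (∑ j ∈ Finset.Ici i, a j)) := by
  have hgeom (i : Fin k) := hasSum_pow_succ_of_lt_one (Real.exp_pos _).le
    (Real.exp_lt_one_iff.mpr (h i))
  have hprod := hasSum_prod_pi_of_nonneg hgeom fun i n => by positivity
  refine ((Fin.cumSumEquiv k).hasSum_iff.mp (hprod.congr_fun fun c => ?_)).tsum_eq
  exact Fin.exp_sum_mul_cumSum a c

/-- If all tail sums `aₙ + ⋯ + a_k` are negative, then the sum of
`exp(a₁b₁ + ⋯ + a_k b_k)` over the integer tuples `1 ≤ b₁ < b₂ < ⋯ < b_k` equals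
`∏ₙ exp(aₙ + ⋯ + a_k) / (1 − exp(aₙ + ⋯ + a_k))`. -/
theorem stmt_1 (k : ℕ) (hk : 1 ≤ k) (a : Fin k → ℝ)
    (h : ∀ i : Fin k, ∑ j ∈ Finset.Ici i, a j < 0) :
    ∑' b : {f : Fin k → ℕ // StrictMono f ∧ ∀ i, 1 ≤ f i},
      Real.exp (∑ i, a i * (b.1 i : ℝ)) =
    ∏ i : Fin k,
      Real.exp (∑ j ∈ Finset.Ici i, a j) / (1 - Real.exp (∑ j ∈ Finset.Ici i, a j)) :=
  stmt_1_general k a h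
end

section
/- Let A be a commutative local ring and n ≥ 1. Let D and D′ be diagonal n × n matrices over A whose diagonal entries are units (so D, D′ ∈ GL_n(A)). Then D and D′ are conjugate in GL_n(A) (i.e. there exists P ∈ GL_n(A) with P D P^{−1} = D′) if and only if the diagonal entries of D′ are a permutation of the diagonal entries of D, i.e. there exists a permutation σ of {1, …, n} such that D′_{ii} = D_{σ(i)σ(i)} for all i. -/
/-!
Since `det P = ∑ σ, sign σ * ∏ i, P (σ i) i` is a unit of a local ring, one of its terms is a unit,
so there is a permutation `σ` with every `P (σ i) i` a unit. Comparing the `(σ i, i)` entries of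
`D' * P = P * D` and cancelling the unit `P (σ i) i` gives `D' (σ i) = D i`. Conversely,
conjugating by a permutation matrix permutes the diagonal entries.
-/

open Equiv

namespace Matrix

variable {n R : Type*} [Fintype n] [DecidableEq n]

theorem permMatrix_mul_diagonal_mul_permMatrix_inv [NonAssocSemiring R] (σ : Perm n) (d : n → R) :
    σ.permMatrix R * diagonal d * σ⁻¹.permMatrix R = diagonal (d ∘ σ) := by
  rw [PEquiv.toMatrix_toPEquiv_mul, PEquiv.mul_toMatrix_toPEquiv, submatrix_submatrix]
  exact submatrix_diagonal_equiv d σ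

theorem exists_perm_forall_isUnit_of_isUnit_det [CommRing R] [IsLocalRing R] {M : Matrix n n R}
    (hM : IsUnit M.det) : ∃ σ : Perm n, ∀ i, IsUnit (M (σ i) i) := by
  rw [det_apply] at hM
  obtain ⟨σ, -, hσ⟩ := IsLocalRing.exists_of_isUnit_sum hM
  rw [Units.smul_def, zsmul_eq_mul, IsUnit.mul_iff] at hσ
  exact ⟨σ, fun i => IsUnit.prod_iff.mp hσ.2 i (Finset.mem_univ i)⟩

theorem exists_perm_apply_eq_of_diagonal_mul_eq_mul_diagonal [CommRing R] [IsLocalRing R]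
    {M : Matrix n n R} (hM : IsUnit M.det) {d d' : n → R}
    (h : diagonal d' * M = M * diagonal d) : ∃ σ : Perm n, ∀ i, d' i = d (σ i) := by
  obtain ⟨σ, hσ⟩ := exists_perm_forall_isUnit_of_isUnit_det hM
  have hd : ∀ i, d' (σ i) = d i := fun i => by
    have := congr_fun₂ h (σ i) i
    rw [diagonal_mul, mul_diagonal, mul_comm] at this
    exact (hσ i).mul_left_cancel this
  exact ⟨σ⁻¹, fun i => by simpa using hd (σ⁻¹ i)⟩

end Matrix

theorem stmt_7_general (A : Type) [CommRing A] [IsLocalRing A]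
    (n : ℕ) (d d' : Fin n → Aˣ) :
    (∃ P : (Matrix (Fin n) (Fin n) A)ˣ,
        (P : Matrix (Fin n) (Fin n) A) * Matrix.diagonal (fun i => (d i : A)) *
          ((P⁻¹ : (Matrix (Fin n) (Fin n) A)ˣ) : Matrix (Fin n) (Fin n) A) =
        Matrix.diagonal (fun i => (d' i : A))) ↔
    ∃ σ : Equiv.Perm (Fin n), ∀ i, (d' i : A) = (d (σ i) : A) := by
  constructor
  · rintro ⟨P, hP⟩
    refine Matrix.exists_perm_apply_eq_of_diagonal_mul_eq_mul_diagonal (d := fun i => (d i : A))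
      ((Matrix.isUnit_iff_isUnit_det _).mp P.isUnit) ?_
    rw [← hP, Matrix.mul_assoc, Units.inv_mul, Matrix.mul_one]
  · rintro ⟨σ, hσ⟩
    -- `permMatrixHom τ = τ⁻¹.permMatrix`, so this unit is `σ.permMatrix` with inverse `σ⁻¹.permMatrix`.
    refine ⟨Matrix.permMatrixHom.toHomUnits σ⁻¹, ?_⟩
    rw [← map_inv, MonoidHom.coe_toHomUnits, MonoidHom.coe_toHomUnits]
    simp only [Matrix.permMatrixHom_apply, inv_inv]
    rw [Matrix.permMatrix_mul_diagonal_mul_permMatrix_inv]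
    exact congrArg Matrix.diagonal (funext fun i => (hσ i).symm)

/-- Over a commutative local ring `A`, two invertible diagonal matrices are conjugate
in `GL_n(A)` iff their diagonal entries agree up to a permutation. -/
theorem stmt_7 (A : Type) [CommRing A] [IsLocalRing A]
    (n : ℕ) (hn : 1 ≤ n) (d d' : Fin n → Aˣ) :
    (∃ P : (Matrix (Fin n) (Fin n) A)ˣ,
        (P : Matrix (Fin n) (Fin n) A) * Matrix.diagonal (fun i => (d i : A)) *
          ((P⁻¹ : (Matrix (Fin n) (Fin n) A)ˣ) : Matrix (Fin n) (Fin n) A) =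
        Matrix.diagonal (fun i => (d' i : A))) ↔
    ∃ σ : Equiv.Perm (Fin n), ∀ i, (d' i : A) = (d (σ i) : A) :=
  stmt_7_general A n d d'
end

section
/- Let O be a discrete valuation ring with uniformizer π and finite residue field, let O′ be a commutative O-algebra that is free of rank d ≥ 1 as an O-module, let r ≥ 1, and let T : O^n → O^n be an injective O-linear map. For an O-algebra R, let T_R : R^n → R^n denote the map obtained from T by base change. Then the kernel and cokernel of T_{O/π^r O} are finite of equal cardinality N, and the kernel and cokernel of T_{O′/π^r O′} are finite of equal cardinality N^d. -/
/-! For an endomorphism of a finite module, kernel and cokernel have the same cardinality, both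
being `|M| / |im f|`; this applies over the finite ring `O/π^r` and over `O'/π^r O'`. A basis of
`O'` over `O` identifies `O'/π^r O'` with `(O/π^r)^d` as `O`-modules, and since `T` has entries
in `O` this identification turns the base change of `T` to `O'/π^r O'` into `d` copies of its
base change to `O/π^r`. Hence the kernel over `O'/π^r O'` is the `d`-th power of the kernel over
`O/π^r`. -/

/-- The base change of an `O`-linear endomorphism of `O^n` to an `O`-algebra `R`,
realized on `R^n` via the corresponding matrix. -/
noncomputable def baseChangeMap (O : Type) [CommRing O] (R : Type) [CommRing R]
    [Algebra O R] (n : ℕ) (T : (Fin n → O) →ₗ[O] (Fin n → O)) :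
    (Fin n → R) →ₗ[R] (Fin n → R) :=
  Matrix.toLin' ((LinearMap.toMatrix' T).map (algebraMap O R))

theorem LinearMap.card_ker_eq_card_quotient_range {R M : Type*} [Ring R] [AddCommGroup M]
    [Module R M] [Finite M] (f : M →ₗ[R] M) :
    Nat.card (ker f) = Nat.card (M ⧸ range f) := by
  have h := (ker f).card_eq_card_quotient_mul_card
  rw [Nat.card_congr f.quotKerEquivRange.toEquiv, (range f).card_eq_card_quotient_mul_card] at h
  exact Nat.eq_of_mul_eq_mul_right (Nat.card_pos (α := range f)) (by linarith)

theorem IsDiscreteValuationRing.finite_quotient_span_pow {O : Type*} [CommRing O] [IsDomain O]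
    [IsDiscreteValuationRing O] [Finite (IsLocalRing.ResidueField O)] {π : O}
    (hπ : Irreducible π) (r : ℕ) : Finite (O ⧸ Ideal.span {π ^ r}) := by
  rw [← Ideal.span_singleton_pow, ← hπ.maximalIdeal_eq]
  have : Finite (O ⧸ IsLocalRing.maximalIdeal O) := ‹Finite (IsLocalRing.ResidueField O)›
  exact Ideal.finite_quotient_pow (IsNoetherian.noetherian _) r

noncomputable def Module.Basis.quotientSpanAlgebraMapEquiv {O A ι : Type*} [CommRing O]
    [CommRing A] [Algebra O A] [Fintype ι] [DecidableEq ι] (b : Module.Basis ι O A) (c : O) :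
    (A ⧸ Ideal.span {algebraMap O A c}) ≃ₗ[O] (ι → O ⧸ Ideal.span {c}) :=
  (Submodule.quotEquivOfEq _ _ (by rw [Ideal.map_span, Set.image_singleton])).restrictScalars O
    ≪≫ₗ ((Ideal.span {c}).qoutMapEquivTensorQout A).restrictScalars O
    ≪≫ₗ TensorProduct.comm O A _
    ≪≫ₗ b.equivFun.lTensor _
    ≪≫ₗ TensorProduct.piScalarRight O O _ ι

section BaseChange

variable {O R S : Type} [CommRing O] [CommRing R] [CommRing S] [Algebra O R] [Algebra O S]
  {n : ℕ} (T : (Fin n → O) →ₗ[O] (Fin n → O))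

theorem baseChangeMap_apply (v : Fin n → R) (i : Fin n) :
    baseChangeMap O R n T v i = ∑ k, LinearMap.toMatrix' T i k • v k := by
  simp [baseChangeMap, Matrix.mulVec, dotProduct, Algebra.smul_def]

theorem comp_baseChangeMap (ψ : R →ₗ[O] S) (v : Fin n → R) :
    ψ ∘ baseChangeMap O R n T v = baseChangeMap O S n T (ψ ∘ v) := by
  ext i
  simp [baseChangeMap_apply]

theorem card_ker_baseChangeMap_of_linearEquiv {ι : Type*} [Fintype ι]
    (e : R ≃ₗ[O] (ι → S)) :
    Nat.card (LinearMap.ker (baseChangeMap O R n T)) =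
      Nat.card (LinearMap.ker (baseChangeMap O S n T)) ^ Fintype.card ι := by
  let Φ : (Fin n → R) ≃ (ι → Fin n → S) :=
    (Equiv.piCongrRight fun _ => e.toEquiv).trans (Equiv.piComm _)
  have hΦ : ∀ v, baseChangeMap O R n T v = 0 ↔ ∀ j, baseChangeMap O S n T (Φ v j) = 0 := by
    intro v
    have hΦv : ∀ j, Φ v j = (LinearMap.proj j ∘ₗ e.toLinearMap) ∘ v := fun _ => rfl
    simp only [hΦv, ← comp_baseChangeMap, funext_iff]
    simp [forall_comm (α := ι), ← funext_iff (f := e _), ← Pi.zero_def]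
  calc Nat.card (LinearMap.ker (baseChangeMap O R n T))
      = Nat.card (ι → LinearMap.ker (baseChangeMap O S n T)) :=
        Nat.card_congr ((Φ.subtypeEquiv hΦ).trans (Equiv.subtypePiEquivPi))
    _ = _ := by rw [Nat.card_fun, Nat.card_eq_fintype_card (α := ι)]

end BaseChange

theorem stmt_8_general (O : Type) [CommRing O] [IsDomain O] [IsDiscreteValuationRing O]
    [Finite (IsLocalRing.ResidueField O)]
    (π : O) (hπ : Irreducible π)
    (O' : Type) [CommRing O'] [Algebra O O'] [Module.Free O O']
    (d : ℕ) (hd : 1 ≤ d) (hrank : Module.finrank O O' = d)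
    (r : ℕ) (n : ℕ)
    (T : (Fin n → O) →ₗ[O] (Fin n → O)) :
    ∃ N : ℕ,
      Finite (LinearMap.ker (baseChangeMap O (O ⧸ Ideal.span {π ^ r}) n T)) ∧
      Finite ((Fin n → O ⧸ Ideal.span {π ^ r}) ⧸
        LinearMap.range (baseChangeMap O (O ⧸ Ideal.span {π ^ r}) n T)) ∧
      Nat.card (LinearMap.ker (baseChangeMap O (O ⧸ Ideal.span {π ^ r}) n T)) = N ∧
      Nat.card ((Fin n → O ⧸ Ideal.span {π ^ r}) ⧸
        LinearMap.range (baseChangeMap O (O ⧸ Ideal.span {π ^ r}) n T)) = N ∧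
      Finite (LinearMap.ker
        (baseChangeMap O (O' ⧸ Ideal.span {algebraMap O O' (π ^ r)}) n T)) ∧
      Finite ((Fin n → O' ⧸ Ideal.span {algebraMap O O' (π ^ r)}) ⧸
        LinearMap.range
          (baseChangeMap O (O' ⧸ Ideal.span {algebraMap O O' (π ^ r)}) n T)) ∧
      Nat.card (LinearMap.ker
        (baseChangeMap O (O' ⧸ Ideal.span {algebraMap O O' (π ^ r)}) n T)) = N ^ d ∧
      Nat.card ((Fin n → O' ⧸ Ideal.span {algebraMap O O' (π ^ r)}) ⧸
        LinearMap.range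
          (baseChangeMap O (O' ⧸ Ideal.span {algebraMap O O' (π ^ r)}) n T)) = N ^ d := by
  have : Module.Finite O O' := Module.finite_of_finrank_pos (by omega)
  have := IsDiscreteValuationRing.finite_quotient_span_pow hπ r
  let e := (Module.finBasisOfFinrankEq O O' hrank).quotientSpanAlgebraMapEquiv (π ^ r)
  have : Finite (O' ⧸ Ideal.span {algebraMap O O' (π ^ r)}) := .of_equiv _ e.symm.toEquiv
  have hker := card_ker_baseChangeMap_of_linearEquiv T e
  rw [Fintype.card_fin] at hker
  refine ⟨_, inferInstance, Quotient.finite _, rfl,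
    (LinearMap.card_ker_eq_card_quotient_range _).symm,
    inferInstance, Quotient.finite _, hker, ?_⟩
  rw [← LinearMap.card_ker_eq_card_quotient_range, hker]

/-- Let `O` be a DVR with uniformizer `π` and finite residue field, and `O'` a commutative
`O`-algebra which is free of rank `d ≥ 1` as an `O`-module. If `T : O^n → O^n` is an
injective `O`-linear map, then the kernel and cokernel of `T ⊗ O/π^r` are finite of
equal cardinality `N`, and the kernel and cokernel of `T ⊗ O'/π^r O'` are finite of
cardinality `N^d`. -/
theorem stmt_8 (O : Type) [CommRing O] [IsDomain O] [IsDiscreteValuationRing O]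
    [Finite (IsLocalRing.ResidueField O)]
    (π : O) (hπ : Irreducible π)
    (O' : Type) [CommRing O'] [Algebra O O'] [Module.Free O O']
    (d : ℕ) (hd : 1 ≤ d) (hrank : Module.finrank O O' = d)
    (r : ℕ) (hr : 1 ≤ r) (n : ℕ)
    (T : (Fin n → O) →ₗ[O] (Fin n → O)) (hT : Function.Injective T) :
    ∃ N : ℕ,
      Finite (LinearMap.ker (baseChangeMap O (O ⧸ Ideal.span {π ^ r}) n T)) ∧
      Finite ((Fin n → O ⧸ Ideal.span {π ^ r}) ⧸
        LinearMap.range (baseChangeMap O (O ⧸ Ideal.span {π ^ r}) n T)) ∧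
      Nat.card (LinearMap.ker (baseChangeMap O (O ⧸ Ideal.span {π ^ r}) n T)) = N ∧
      Nat.card ((Fin n → O ⧸ Ideal.span {π ^ r}) ⧸
        LinearMap.range (baseChangeMap O (O ⧸ Ideal.span {π ^ r}) n T)) = N ∧
      Finite (LinearMap.ker
        (baseChangeMap O (O' ⧸ Ideal.span {algebraMap O O' (π ^ r)}) n T)) ∧
      Finite ((Fin n → O' ⧸ Ideal.span {algebraMap O O' (π ^ r)}) ⧸
        LinearMap.range
          (baseChangeMap O (O' ⧸ Ideal.span {algebraMap O O' (π ^ r)}) n T)) ∧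
      Nat.card (LinearMap.ker
        (baseChangeMap O (O' ⧸ Ideal.span {algebraMap O O' (π ^ r)}) n T)) = N ^ d ∧
      Nat.card ((Fin n → O' ⧸ Ideal.span {algebraMap O O' (π ^ r)}) ⧸
        LinearMap.range
          (baseChangeMap O (O' ⧸ Ideal.span {algebraMap O O' (π ^ r)}) n T)) = N ^ d :=
  stmt_8_general O π hπ O' d hd hrank r n T
end

section
/- Let O be a discrete valuation ring with uniformizer π and finite residue field of cardinality q, in which 2 ≠ 0, and write 2 = u·π^c with u a unit of O and c ≥ 0. Then for every a ∈ O and every integer s ≥ 1, the number of pairs (x, y) ∈ (O/π^s O)² satisfying x² + a·y² = 1 is at most 4·q^{c}·q^{s}. -/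
/-!
Write `R = O ⧸ (π ^ s)`. If `w` is a unit and `π ^ s ∣ (x - w) (x + w)`, then `π ^ (c + 1)`
cannot divide both factors, since their difference `2 w = u π ^ c w` has valuation exactly `c`;
so one of `x ∓ w` is divisible by `π ^ (s - c)`. Hence the units of `R` with a prescribed square
lie in two cosets of `π ^ (s - c) R`, an additive group of at most `q ^ c` elements.
As `R` is local, every solution of `x² + a y² = 1` has `x²` or `a y²` a unit; fixing the other
coordinate, each kind contributes at most `q ^ s · 2 q ^ c` solutions.
-/

open IsLocalRing

lemma Nat.card_subtype_prod_le_mul {α β : Type*} [Finite α] [Finite β] (P : α → β → Prop)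
    {k : ℕ} (hk : ∀ a, Nat.card {b // P a b} ≤ k) :
    Nat.card {z : α × β // P z.1 z.2} ≤ Nat.card α * k := by
  have := Fintype.ofFinite α
  rw [Nat.card_congr (Equiv.subtypeProdEquivSigmaSubtype P), Nat.card_sigma,
    Nat.card_eq_fintype_card, ← smul_eq_mul]
  exact Finset.sum_le_card_nsmul _ _ _ fun a _ ↦ hk a

lemma Nat.card_le_two_mul_of_sub_mem_or_add_mem {α : Type*} [AddGroup α] [Finite α]
    {P : α → Prop} {S : Set α} (w : α) (h : ∀ y, P y → y - w ∈ S ∨ y + w ∈ S) :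
    Nat.card {y // P y} ≤ 2 * Nat.card S := by
  have hsub : {y | P y} ⊆ (· + w) '' S ∪ (· - w) '' S := fun y hy ↦ by
    rcases h y hy with h' | h'
    · exact Or.inl ⟨y - w, h', sub_add_cancel y w⟩
    · exact Or.inr ⟨y + w, h', add_sub_cancel_right y w⟩
  rw [← Set.coe_ofPred, Nat.card_coe_set_eq, Nat.card_coe_set_eq, two_mul]
  calc {y | P y}.ncard ≤ ((· + w) '' S ∪ (· - w) '' S).ncard := Set.ncard_le_ncard hsub
    _ ≤ ((· + w) '' S).ncard + ((· - w) '' S).ncard := Set.ncard_union_le _ _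
    _ = S.ncard + S.ncard := by
      rw [Set.ncard_image_of_injective _ (add_left_injective w),
        Set.ncard_image_of_injective _ sub_left_injective]

lemma Ideal.Quotient.nontrivial_span_pow {R : Type*} [CommRing R] {p : R} (hp : ¬IsUnit p)
    {s : ℕ} (hs : s ≠ 0) : Nontrivial (R ⧸ Ideal.span {p ^ s}) := by
  rwa [Ideal.Quotient.nontrivial_iff, Ne, Ideal.span_singleton_eq_top, isUnit_pow_iff hs]

lemma IsLocalRing.card_sq_add_mul_sq_eq_one_le {R : Type*} [CommRing R] [IsLocalRing R]
    [Finite R] (A : R) {k : ℕ} (hk : ∀ B b : R, Nat.card {y // IsUnit b ∧ B * y ^ 2 = b} ≤ k) :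
    Nat.card {z : R × R // z.1 ^ 2 + A * z.2 ^ 2 = 1} ≤ 2 * Nat.card R * k := by
  let S₁ := {z : R × R // IsUnit (1 - A * z.1 ^ 2) ∧ z.2 ^ 2 = 1 - A * z.1 ^ 2}
  let S₂ := {z : R × R // IsUnit (1 - z.1 ^ 2) ∧ A * z.2 ^ 2 = 1 - z.1 ^ 2}
  let f : S₁ ⊕ S₂ → {z : R × R // z.1 ^ 2 + A * z.2 ^ 2 = 1} := Sum.elim
    (fun z ↦ ⟨(z.1.2, z.1.1), by linear_combination z.2.2⟩)
    (fun z ↦ ⟨z.1, by linear_combination z.2.2⟩)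
  have hf : Function.Surjective f := by
    rintro ⟨⟨x, y⟩, hxy⟩
    rcases isUnit_or_isUnit_of_add_one hxy with hx | hy
    · exact ⟨.inl ⟨(y, x), by rwa [← hxy, add_sub_cancel_right], by linear_combination hxy⟩, rfl⟩
    · exact ⟨.inr ⟨(x, y), by rwa [← hxy, add_sub_cancel_left], by linear_combination hxy⟩, rfl⟩
  calc _ ≤ Nat.card (S₁ ⊕ S₂) := Nat.card_le_card_of_surjective f hf
    _ = Nat.card S₁ + Nat.card S₂ := Nat.card_sum
    _ ≤ Nat.card R * k + Nat.card R * k := add_le_add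
        (Nat.card_subtype_prod_le_mul (fun y x ↦ IsUnit (1 - A * y ^ 2) ∧ x ^ 2 = 1 - A * y ^ 2)
          fun _ ↦ by simpa only [one_mul] using hk 1 _)
        (Nat.card_subtype_prod_le_mul (fun x y ↦ IsUnit (1 - x ^ 2) ∧ A * y ^ 2 = 1 - x ^ 2)
          fun _ ↦ hk A _)
    _ = 2 * Nat.card R * k := by ring

namespace IsDiscreteValuationRing

variable {O : Type*} [CommRing O] [IsDomain O] [IsDiscreteValuationRing O] {π : O}

lemma finite_quotient_span_pow_s16 [Finite (ResidueField O)] (hπ : Irreducible π) (n : ℕ) :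
    Finite (O ⧸ Ideal.span {π ^ n}) := by
  rw [finite_quotient_iff]
  exact ⟨n, by rw [hπ.maximalIdeal_eq, Ideal.span_singleton_pow]⟩

lemma card_quotient_span_pow_le [Finite (ResidueField O)] (hπ : Irreducible π) (n : ℕ) :
    Nat.card (O ⧸ Ideal.span {π ^ n}) ≤ Nat.card (ResidueField O) ^ n := by
  have : Finite (O ⧸ IsLocalRing.maximalIdeal O) := ‹Finite (ResidueField O)›
  have hm : Ideal.span ({π} : Finset O) = IsLocalRing.maximalIdeal O := by
    rw [Finset.coe_singleton, hπ.maximalIdeal_eq]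
  have hpow : IsLocalRing.maximalIdeal O ^ n = Ideal.span {π ^ n} := by
    rw [hπ.maximalIdeal_eq, Ideal.span_singleton_pow]
  have h := Ideal.index_pow_le {π} hm n
  simp only [hpow, Finset.card_singleton, one_pow, Finset.sum_const, Finset.card_range,
    smul_eq_mul, mul_one] at h
  exact h

lemma pow_sub_dvd_of_pow_dvd_mul (hπ : Irreducible π) {s c : ℕ} {d e : O}
    (hde : π ^ s ∣ d * e) (he : ¬ π ^ (c + 1) ∣ e) : π ^ (s - c) ∣ d := by
  rcases le_or_gt s c with hsc | hcs
  · simp [Nat.sub_eq_zero_of_le hsc]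
  obtain ⟨j, v, rfl⟩ :=
    eq_unit_mul_pow_irreducible (x := e) (by rintro rfl; exact he (dvd_zero _)) hπ
  have hjc : j ≤ c := by
    by_contra! hcj
    exact he (Dvd.dvd.mul_left (pow_dvd_pow π hcj) _)
  rw [← Nat.sub_add_cancel (hjc.trans hcs.le), pow_add, ← mul_assoc, mul_comm d,
    mul_dvd_mul_iff_right (pow_ne_zero j hπ.ne_zero), Units.dvd_mul_left] at hde
  exact (pow_dvd_pow π (by omega)).trans hde

lemma pow_sub_dvd_sub_or_add_of_pow_dvd_sq_sub_sq (hπ : Irreducible π) (u : Oˣ) {c s : ℕ}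
    (h2 : (2 : O) = u * π ^ c) {x w : O} (hw : IsUnit w) (h : π ^ s ∣ x ^ 2 - w ^ 2) :
    π ^ (s - c) ∣ x - w ∨ π ^ (s - c) ∣ x + w := by
  have hprod : π ^ s ∣ (x - w) * (x + w) := by rwa [sq_sub_sq, mul_comm] at h
  by_cases hadd : π ^ (c + 1) ∣ x + w
  · refine Or.inr (pow_sub_dvd_of_pow_dvd_mul hπ (mul_comm (x - w) _ ▸ hprod) fun hsub ↦ ?_)
    have h2w : π ^ c * π ∣ π ^ c * (u * w) := by
      rw [← pow_succ, ← mul_assoc, mul_comm _ (u : O), ← h2]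
      convert dvd_sub hadd hsub using 1
      ring
    rw [mul_dvd_mul_iff_left (pow_ne_zero c hπ.ne_zero)] at h2w
    exact hπ.not_isUnit (isUnit_of_dvd_unit h2w (u.isUnit.mul hw))
  · exact Or.inl (pow_sub_dvd_of_pow_dvd_mul hπ hprod hadd)

lemma mk_pow_sub_dvd_sub_or_add_of_sq_eq_sq (hπ : Irreducible π) (u : Oˣ) {c s : ℕ}
    (h2 : (2 : O) = u * π ^ c) (hs : s ≠ 0) {x w : O ⧸ Ideal.span {π ^ s}} (hw : IsUnit w)
    (h : x ^ 2 = w ^ 2) :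
    Ideal.Quotient.mk _ (π ^ (s - c)) ∣ x - w ∨ Ideal.Quotient.mk _ (π ^ (s - c)) ∣ x + w := by
  have := Ideal.Quotient.nontrivial_span_pow hπ.not_isUnit hs
  have := IsLocalHom.of_surjective _ (Ideal.Quotient.mk_surjective (I := Ideal.span {π ^ s}))
  obtain ⟨x, rfl⟩ := Ideal.Quotient.mk_surjective x
  obtain ⟨w, rfl⟩ := Ideal.Quotient.mk_surjective w
  have hdvd : π ^ s ∣ x ^ 2 - w ^ 2 := by
    rwa [← Ideal.mem_span_singleton, ← Ideal.Quotient.eq, map_pow, map_pow]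
  refine (pow_sub_dvd_sub_or_add_of_pow_dvd_sq_sub_sq hπ u h2 (hw.of_map _) hdvd).imp ?_ ?_
  · exact fun h' ↦ map_sub (Ideal.Quotient.mk (Ideal.span {π ^ s})) x w ▸ map_dvd _ h'
  · exact fun h' ↦ map_add (Ideal.Quotient.mk (Ideal.span {π ^ s})) x w ▸ map_dvd _ h'

variable [Finite (ResidueField O)]

lemma card_mk_pow_sub_dvd_le (hπ : Irreducible π) (s c : ℕ) :
    Nat.card {d : O ⧸ Ideal.span {π ^ s} // Ideal.Quotient.mk _ (π ^ (s - c)) ∣ d} ≤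
      Nat.card (ResidueField O) ^ c := by
  let f : O →ₗ[O] O ⧸ Ideal.span {π ^ s} :=
    (Ideal.span {π ^ s}).mkQ ∘ₗ LinearMap.mulLeft O (π ^ (s - c))
  have hf : Ideal.span {π ^ c} ≤ LinearMap.ker f := fun e he ↦ by
    obtain ⟨e, rfl⟩ := Ideal.mem_span_singleton.1 he
    simp only [LinearMap.mem_ker, f, LinearMap.comp_apply, LinearMap.mulLeft_apply,
      Submodule.mkQ_apply, Submodule.Quotient.mk_eq_zero, Ideal.mem_span_singleton]
    rw [← mul_assoc, ← pow_add]
    exact Dvd.dvd.mul_right (pow_dvd_pow π (by omega)) e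
  have := finite_quotient_span_pow_s16 hπ c
  calc _ ≤ Nat.card (Set.range ((Ideal.span {π ^ c}).liftQ f hf)) := by
        refine Nat.card_mono (Set.toFinite _) fun d ⟨r, hr⟩ ↦ ?_
        obtain ⟨r, rfl⟩ := Ideal.Quotient.mk_surjective r
        exact ⟨Submodule.Quotient.mk r, by simp [f, hr]; rfl⟩
    _ ≤ Nat.card (O ⧸ Ideal.span {π ^ c}) := Finite.card_range_le _
    _ ≤ Nat.card (ResidueField O) ^ c := card_quotient_span_pow_le hπ c

lemma card_mul_sq_eq_le (hπ : Irreducible π) (u : Oˣ) {c s : ℕ} (h2 : (2 : O) = u * π ^ c)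
    (hs : s ≠ 0) (A b : O ⧸ Ideal.span {π ^ s}) :
    Nat.card {y : O ⧸ Ideal.span {π ^ s} // IsUnit b ∧ A * y ^ 2 = b} ≤
      2 * Nat.card (ResidueField O) ^ c := by
  have := finite_quotient_span_pow_s16 hπ s
  by_cases hsol : ∃ w, IsUnit b ∧ A * w ^ 2 = b
  swap
  · have : IsEmpty {y // IsUnit b ∧ A * y ^ 2 = b} := ⟨fun y ↦ hsol ⟨y, y.2⟩⟩
    simp
  obtain ⟨w, hb, rfl⟩ := hsol
  have hA : IsUnit A := isUnit_of_mul_isUnit_left hb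
  have hw : IsUnit w := (isUnit_pow_iff two_ne_zero).1 (isUnit_of_mul_isUnit_right hb)
  refine (Nat.card_le_two_mul_of_sub_mem_or_add_mem w fun y ⟨_, hy⟩ ↦ ?_).trans
    (Nat.mul_le_mul_left 2 (card_mk_pow_sub_dvd_le hπ s c))
  exact mk_pow_sub_dvd_sub_or_add_of_sq_eq_sq hπ u h2 hs hw (hA.mul_left_cancel hy)

end IsDiscreteValuationRing

open IsDiscreteValuationRing

theorem stmt_16_general (O : Type) [CommRing O] [IsDomain O] [IsDiscreteValuationRing O]
    [Finite (IsLocalRing.ResidueField O)]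
    (π : O) (hπ : Irreducible π)
    (u : Oˣ) (c : ℕ) (h2eq : (2 : O) = (u : O) * π ^ c)
    (a : O) (s : ℕ) (hs : 1 ≤ s) :
    Nat.card {z : (O ⧸ Ideal.span {π ^ s}) × (O ⧸ Ideal.span {π ^ s}) //
        z.1 ^ 2 + (Ideal.Quotient.mk (Ideal.span {π ^ s}) a) * z.2 ^ 2 = 1} ≤
      4 * Nat.card (IsLocalRing.ResidueField O) ^ c *
        Nat.card (IsLocalRing.ResidueField O) ^ s := by
  have hs0 : s ≠ 0 := by omega
  have := finite_quotient_span_pow_s16 hπ s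
  have := Ideal.Quotient.nontrivial_span_pow hπ.not_isUnit hs0
  have := IsLocalRing.of_surjective' _ (Ideal.Quotient.mk_surjective (I := Ideal.span {π ^ s}))
  calc _ ≤ 2 * Nat.card (O ⧸ Ideal.span {π ^ s}) * (2 * Nat.card (ResidueField O) ^ c) :=
        card_sq_add_mul_sq_eq_one_le _ (card_mul_sq_eq_le hπ u h2eq hs0)
    _ ≤ 2 * Nat.card (ResidueField O) ^ s * (2 * Nat.card (ResidueField O) ^ c) := by
        gcongr
        exact card_quotient_span_pow_le hπ s
    _ = 4 * Nat.card (ResidueField O) ^ c * Nat.card (ResidueField O) ^ s := by ring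

/-- Let `O` be a DVR with uniformizer `π` and finite residue field of cardinality `q`,
in which `2 ≠ 0`, and write `2 = u π^c` with `u` a unit. Then for every `a ∈ O` and
every `s ≥ 1`, the number of pairs `(x, y) ∈ (O/π^s O)²` with `x² + a y² = 1` is at
most `4 q^c q^s`. -/
theorem stmt_16 (O : Type) [CommRing O] [IsDomain O] [IsDiscreteValuationRing O]
    [Finite (IsLocalRing.ResidueField O)]
    (π : O) (hπ : Irreducible π)
    (h2 : (2 : O) ≠ 0) (u : Oˣ) (c : ℕ) (h2eq : (2 : O) = (u : O) * π ^ c)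
    (a : O) (s : ℕ) (hs : 1 ≤ s) :
    Nat.card {z : (O ⧸ Ideal.span {π ^ s}) × (O ⧸ Ideal.span {π ^ s}) //
        z.1 ^ 2 + (Ideal.Quotient.mk (Ideal.span {π ^ s}) a) * z.2 ^ 2 = 1} ≤
      4 * Nat.card (IsLocalRing.ResidueField O) ^ c *
        Nat.card (IsLocalRing.ResidueField O) ^ s :=
  stmt_16_general O π hπ u c h2eq a s hs
end

section
/- For an odd integer q ≥ 3 and a real number s, define Z(q, s) = 1 + q^{−s} + ((q−3)/2)·(q+1)^{−s} + 2·((q+1)/2)^{−s} + ((q−1)/2)·(q−1)^{−s} + 2·((q−1)/2)^{−s} + [ 4q·((q²−1)/2)^{−s} + ((q²−1)/2)·(q²−q)^{−s} + ((q−1)²/2)·(q²+q)^{−s} ] / (1 − q^{1−s}). Then for every odd integer q ≥ 3 and every real s with 2 ≤ s ≤ 3, (1 − q^{1−s})^{−1/2} < Z(q, s) < (1 − q^{1−s})^{−100}. -/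
/-! With `x = q^{1-s} ≤ 1/3`: dropping nonnegative terms and using `(q-1)^{1-s} > q^{1-s}` gives
`Z > 1 + x/2 + x²`, which exceeds `(1-x)^{-1/2}` after squaring. For the upper bound every base in
`Z` is within a factor `3` of `q` or `q²`, so each term is a bounded multiple of `x` (the geometric
denominator is at most `3/2`); hence `Z ≤ 1 + 50x < 1 + 100x ≤ (1-x)^{-100}` by Bernoulli's inequality. -/

/-- The representation zeta function of `SL₂(O)` for `O` the ring of integers of a
non-archimedean local field with residue field of odd cardinality `q`
(Jaikin-Zapirain's formula). -/
noncomputable def jaikinZeta (q : ℕ) (s : ℝ) : ℝ :=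
  1 + (q : ℝ) ^ (-s) + ((q : ℝ) - 3) / 2 * ((q : ℝ) + 1) ^ (-s) +
    2 * (((q : ℝ) + 1) / 2) ^ (-s) +
    ((q : ℝ) - 1) / 2 * ((q : ℝ) - 1) ^ (-s) +
    2 * (((q : ℝ) - 1) / 2) ^ (-s) +
    (4 * (q : ℝ) * (((q : ℝ) ^ 2 - 1) / 2) ^ (-s) +
        ((q : ℝ) ^ 2 - 1) / 2 * ((q : ℝ) ^ 2 - (q : ℝ)) ^ (-s) +
        ((q : ℝ) - 1) ^ 2 / 2 * ((q : ℝ) ^ 2 + (q : ℝ)) ^ (-s)) /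
      (1 - (q : ℝ) ^ (1 - s))

open Real

lemma mul_rpow_neg_eq_rpow_one_sub {a : ℝ} (ha : 0 < a) (s : ℝ) : a * a ^ (-s) = a ^ (1 - s) := by
  rw [sub_eq_neg_add, rpow_add ha, rpow_one, mul_comm]

lemma rpow_neg_le_pow_mul_rpow_neg {a b c s : ℝ} {n : ℕ} (hb : 0 < b) (hc : 1 ≤ c)
    (hbc : b ≤ c * a) (hs : 0 ≤ s) (hsn : s ≤ n) : a ^ (-s) ≤ c ^ n * b ^ (-s) := by
  have hc0 : 0 < c := by linarith
  have ha : 0 < a := pos_of_mul_pos_right (hb.trans_le hbc) hc0.le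
  calc a ^ (-s) = c ^ s * (c * a) ^ (-s) := by
        rw [mul_rpow hc0.le ha.le, rpow_neg hc0.le, ← mul_assoc,
          mul_inv_cancel₀ (rpow_pos_of_pos hc0 s).ne', one_mul]
    _ ≤ c ^ (n : ℝ) * b ^ (-s) :=
        mul_le_mul (rpow_le_rpow_of_exponent_le hc hsn) (rpow_le_rpow_of_nonpos hb hbc (by linarith))
          (by positivity) (by positivity)
    _ = c ^ n * b ^ (-s) := by rw [rpow_natCast]

lemma one_sub_rpow_neg_half_lt {x : ℝ} (hx0 : 0 < x) (hx : x ≤ 1 / 2) :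
    (1 - x) ^ (-(1 / 2) : ℝ) < 1 + x / 2 + x ^ 2 := by
  rw [rpow_neg (by linarith), ← inv_rpow (by linarith), ← sqrt_eq_rpow, sqrt_lt' (by positivity),
    inv_lt_iff_one_lt_mul₀ (by linarith)]
  -- `(1 + x/2 + x²)² (1 - x) = 1 + x² (5/4 - 5x/4 - x³)`
  nlinarith [mul_pos (pow_pos hx0 2) (show 0 < 5 / 4 - 5 / 4 * x - x ^ 3 by
    nlinarith [pow_le_pow_left₀ hx0.le hx 3])]

lemma one_add_mul_le_one_sub_rpow_neg {x p : ℝ} (hx0 : 0 ≤ x) (hx1 : x < 1) (hp : 1 ≤ p) :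
    1 + p * x ≤ (1 - x) ^ (-p) := by
  have hx1' : 0 < 1 - x := by linarith
  calc 1 + p * x ≤ 1 + p * (x / (1 - x)) := by
        gcongr; exact le_div_self hx0 hx1' (by linarith)
    _ ≤ (1 + x / (1 - x)) ^ p :=
        one_add_mul_self_le_rpow_one_add (by linarith [div_nonneg hx0 hx1'.le]) hp
    _ = (1 - x) ^ (-p) := by
        rw [rpow_neg hx1'.le, ← inv_rpow hx1'.le]
        congr 1
        field_simp
        ring

lemma rpow_one_sub_le_one_third {Q s : ℝ} (hQ : 3 ≤ Q) (hs : 2 ≤ s) : Q ^ (1 - s) ≤ 1 / 3 :=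
  calc Q ^ (1 - s) ≤ Q ^ (-1 : ℝ) := rpow_le_rpow_of_exponent_le (by linarith) (by linarith)
    _ = Q⁻¹ := rpow_neg_one Q
    _ ≤ 1 / 3 := by rw [one_div]; exact inv_anti₀ (by norm_num) hQ

lemma one_add_half_add_sq_lt_jaikinZeta {q : ℕ} {s : ℝ} (hq : 3 ≤ q) (hs : 2 ≤ s) :
    1 + (q : ℝ) ^ (1 - s) / 2 + ((q : ℝ) ^ (1 - s)) ^ 2 < jaikinZeta q s := by
  have hQ : (3 : ℝ) ≤ q := by exact_mod_cast hq
  rw [jaikinZeta]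
  set Q : ℝ := (q : ℝ)
  set x := Q ^ (1 - s)
  have hx : x < 1 := (rpow_one_sub_le_one_third hQ hs).trans_lt (by norm_num)
  have hsq : x ^ 2 ≤ Q ^ (-s) := by
    rw [← rpow_mul_natCast (by linarith)]
    exact rpow_le_rpow_of_exponent_le (by linarith) (by push_cast; linarith)
  have hhalf : x / 2 < (Q - 1) / 2 * (Q - 1) ^ (-s) := by
    rw [div_mul_eq_mul_div, mul_rpow_neg_eq_rpow_one_sub (by linarith)]
    exact div_lt_div_of_pos_right (rpow_lt_rpow_of_neg (by linarith) (by linarith) (by linarith))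
      (by norm_num)
  have hpos : ∀ a : ℝ, 0 < a → 0 ≤ a ^ (-s) := fun a ha => (rpow_pos_of_pos ha _).le
  have htail : 0 ≤ (4 * Q * ((Q ^ 2 - 1) / 2) ^ (-s) + (Q ^ 2 - 1) / 2 * (Q ^ 2 - Q) ^ (-s) +
      (Q - 1) ^ 2 / 2 * (Q ^ 2 + Q) ^ (-s)) / (1 - x) := by
    have hQ2 : 3 * Q ≤ Q ^ 2 := by nlinarith
    refine div_nonneg (add_nonneg (add_nonneg ?_ ?_) ?_) (by linarith)
    · exact mul_nonneg (by linarith) (hpos _ (by linarith))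
    · exact mul_nonneg (by linarith) (hpos _ (by linarith))
    · exact mul_nonneg (by positivity) (hpos _ (by positivity))
  linarith [mul_nonneg (show 0 ≤ (Q - 3) / 2 by linarith) (hpos (Q + 1) (by linarith)),
    hpos ((Q + 1) / 2) (by linarith), hpos ((Q - 1) / 2) (by linarith)]

lemma jaikinZeta_numerator_le {Q s : ℝ} (hQ : 3 ≤ Q) (hs2 : 2 ≤ s) (hs3 : s ≤ 3) :
    4 * Q * ((Q ^ 2 - 1) / 2) ^ (-s) + (Q ^ 2 - 1) / 2 * (Q ^ 2 - Q) ^ (-s) +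
      (Q - 1) ^ 2 / 2 * (Q ^ 2 + Q) ^ (-s) ≤ 14 * Q ^ (1 - s) := by
  have hx3 := rpow_one_sub_le_one_third hQ hs2
  rw [← mul_rpow_neg_eq_rpow_one_sub (by linarith)] at hx3 ⊢
  set u := Q ^ (-s)
  have hu : 0 < u := rpow_pos_of_pos (by linarith) _
  have hu9 : u ≤ 1 / 9 := by nlinarith
  have hx : 0 ≤ Q * u := by positivity
  have hsq : (Q ^ 2) ^ (-s) = u ^ 2 := by rw [sq, sq, mul_rpow (by linarith) (by linarith)]
  have hs3' : s ≤ ((3 : ℕ) : ℝ) := by exact_mod_cast hs3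
  have h1 : ((Q ^ 2 - 1) / 2) ^ (-s) ≤ 3 ^ 3 * u ^ 2 := hsq ▸
    rpow_neg_le_pow_mul_rpow_neg (by positivity) (by norm_num) (by nlinarith) (by linarith) hs3'
  have h2 : (Q ^ 2 - Q) ^ (-s) ≤ 2 ^ 3 * u ^ 2 := hsq ▸
    rpow_neg_le_pow_mul_rpow_neg (by positivity) (by norm_num) (by nlinarith) (by linarith) hs3'
  have h3 : (Q ^ 2 + Q) ^ (-s) ≤ u ^ 2 := hsq ▸
    rpow_le_rpow_of_nonpos (by positivity) (by linarith) (by linarith)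
  have n1 := mul_le_mul_of_nonneg_left h1 (by linarith : 0 ≤ 4 * Q)
  have n2 := mul_le_mul_of_nonneg_left h2 (by nlinarith : 0 ≤ (Q ^ 2 - 1) / 2)
  have n3 := mul_le_mul_of_nonneg_left h3 (by positivity : 0 ≤ (Q - 1) ^ 2 / 2)
  nlinarith [mul_le_mul_of_nonneg_left hu9 hx, mul_le_mul_of_nonneg_left hx3 hx,
    mul_nonneg hx hu.le, sq_nonneg u]

lemma jaikinZeta_le_one_add_fifty_mul {q : ℕ} {s : ℝ} (hq : 3 ≤ q) (hs2 : 2 ≤ s) (hs3 : s ≤ 3) :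
    jaikinZeta q s ≤ 1 + 50 * (q : ℝ) ^ (1 - s) := by
  have hQ : (3 : ℝ) ≤ q := by exact_mod_cast hq
  have hx3 := rpow_one_sub_le_one_third hQ hs2
  have hN := jaikinZeta_numerator_le hQ hs2 hs3
  rw [jaikinZeta]
  set Q : ℝ := (q : ℝ)
  rw [← mul_rpow_neg_eq_rpow_one_sub (by linarith)] at hx3 hN ⊢
  set u := Q ^ (-s)
  have hu : 0 < u := rpow_pos_of_pos (by linarith) _
  have hs3' : s ≤ ((3 : ℕ) : ℝ) := by exact_mod_cast hs3
  have h1 : (Q + 1) ^ (-s) ≤ u := rpow_le_rpow_of_nonpos (by linarith) (by linarith) (by linarith)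
  have h2 : ((Q + 1) / 2) ^ (-s) ≤ 2 ^ 3 * u :=
    rpow_neg_le_pow_mul_rpow_neg (by linarith) (by norm_num) (by linarith) (by linarith) hs3'
  have h3 : (Q - 1) ^ (-s) ≤ 2 ^ 3 * u :=
    rpow_neg_le_pow_mul_rpow_neg (by linarith) (by norm_num) (by linarith) (by linarith) hs3'
  have h4 : ((Q - 1) / 2) ^ (-s) ≤ 3 ^ 3 * u :=
    rpow_neg_le_pow_mul_rpow_neg (by linarith) (by norm_num) (by linarith) (by linarith) hs3'
  have htail : (4 * Q * ((Q ^ 2 - 1) / 2) ^ (-s) + (Q ^ 2 - 1) / 2 * (Q ^ 2 - Q) ^ (-s) +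
      (Q - 1) ^ 2 / 2 * (Q ^ 2 + Q) ^ (-s)) / (1 - Q * u) ≤ 21 * (Q * u) := by
    rw [div_le_iff₀ (by linarith)]
    nlinarith [mul_le_mul_of_nonneg_left hx3 (by positivity : 0 ≤ Q * u)]
  have t2 : (Q - 3) / 2 * (Q + 1) ^ (-s) ≤ Q / 2 * u :=
    mul_le_mul (by linarith) h1 (rpow_pos_of_pos (by linarith) _).le (by linarith)
  have t4 : (Q - 1) / 2 * (Q - 1) ^ (-s) ≤ (Q - 1) / 2 * (2 ^ 3 * u) :=
    mul_le_mul_of_nonneg_left h3 (by linarith)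
  linarith [mul_le_mul_of_nonneg_right hQ hu.le]

theorem stmt_18_general (q : ℕ) (hq3 : 3 ≤ q) (s : ℝ) (hs2 : 2 ≤ s) (hs3 : s ≤ 3) :
    (1 - (q : ℝ) ^ (1 - s)) ^ (-(1 / 2) : ℝ) < jaikinZeta q s ∧
      jaikinZeta q s < (1 - (q : ℝ) ^ (1 - s)) ^ (-(100 : ℝ)) := by
  have hQ : (3 : ℝ) ≤ q := by exact_mod_cast hq3
  have hx0 : 0 < (q : ℝ) ^ (1 - s) := rpow_pos_of_pos (by linarith) _
  have hx3 := rpow_one_sub_le_one_third hQ hs2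
  constructor
  · calc (1 - (q : ℝ) ^ (1 - s)) ^ (-(1 / 2) : ℝ)
        < 1 + (q : ℝ) ^ (1 - s) / 2 + ((q : ℝ) ^ (1 - s)) ^ 2 :=
          one_sub_rpow_neg_half_lt hx0 (by linarith)
      _ < jaikinZeta q s := one_add_half_add_sq_lt_jaikinZeta hq3 hs2
  · calc jaikinZeta q s ≤ 1 + 50 * (q : ℝ) ^ (1 - s) := jaikinZeta_le_one_add_fifty_mul hq3 hs2 hs3
      _ < 1 + 100 * (q : ℝ) ^ (1 - s) := by linarith
      _ ≤ (1 - (q : ℝ) ^ (1 - s)) ^ (-(100 : ℝ)) :=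
          one_add_mul_le_one_sub_rpow_neg hx0.le (by linarith) (by norm_num)

/-- For every odd `q ≥ 3` and every real `2 ≤ s ≤ 3`,
`(1 − q^{1−s})^{−1/2} < Z(q, s) < (1 − q^{1−s})^{−100}`. -/
theorem stmt_18 (q : ℕ) (hq : Odd q) (hq3 : 3 ≤ q) (s : ℝ) (hs2 : 2 ≤ s) (hs3 : s ≤ 3) :
    (1 - (q : ℝ) ^ (1 - s)) ^ (-(1 / 2) : ℝ) < jaikinZeta q s ∧
      jaikinZeta q s < (1 - (q : ℝ) ^ (1 - s)) ^ (-(100 : ℝ)) :=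
  stmt_18_general q hq3 s hs2 hs3
end
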